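/- Let -∞ ≤ a < b ≤ ∞, let α > 0, let w be a weight on (a,b) with 0 < W(t) := ∫_t^b w < ∞ for all t ∈ (a,b), and let {x_k}_{k=N}^∞ (N ∈ ℤ) be a discretizing sequence of W, i.e. a strictly increasing sequence in [a,b] with x_N = a and d₁ 2^{-k} ≤ W(x_k) ≤ d₂ 2^{-k} for all k ≥ N, for some constants 0 < d₁ ≤ d₂. Then there exist positive constants c₁, c₂ (depending only on α, d₁, d₂) such that for every n ≥ N and every nonnegative nondecreasing function h on (a,b): c₁ · Σ_{k=n+1}^∞ 2^{-kα} h(x_k) ≤ ∫_{x_n}^b W(x)^{α-1} w(x) h(x) dx ≤ c₂ · Σ_{k=n+1}^∞ 2^{-kα} h(x_k). -/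

import Mathlib

open MeasureTheory ENNReal Set

noncomputable section

/-- The open interval `(a, b)` of real numbers, with extended-real endpoints. -/
def Iab (a b : EReal) : Set ℝ := {x : ℝ | a < (x : EReal) ∧ (x : EReal) < b}

/-- `𝒲(x) = ∫_x^b w(s) ds`. -/
def Wf (w : ℝ → ℝ≥0∞) (b : EReal) (x : EReal) : ℝ≥0∞ := ∫⁻ s in Iab x b, w s

/-!
Cut `(x_n, b)` into the pieces `(x_k, x_{k+1}]`, `k ≥ n`; they cover it since `W > 0` on `(a, b)`
while `W(x_k) → 0`. On `(x_k, x_{k+1}]` we have `W ≍ 2^{-k}`, so `W^{α-1} ≲ 2^{-k(α-1)}` (bound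
`W^{α-1}` by the powers of both bounds for `W`, whatever the sign of `α - 1`), `h ≤ h(x_{k+1})` and
`∫ w ≤ W(x_k) ≲ 2^{-k}`: the piece contributes `≲ 2^{-(k+1)α} h(x_{k+1})`.
For the lower bound fix `m` with `d₂ 2^{-m} < d₁`. Then `∫ w` over `(x_k, x_{k+m}]` is at least
`W(x_k) - W(x_{k+m}) ≥ (d₁ - d₂ 2^{-m}) 2^{-k}`, so this longer piece contributes
`≳ 2^{-kα} h(x_k)`; each point of `(x_n, b)` lies in at most `m` of the longer pieces.
-/

namespace ENNReal

theorem rpow_le_rpow_of_nonpos {x y : ℝ≥0∞} {z : ℝ} (hxy : x ≤ y) (hz : z ≤ 0) :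
    y ^ z ≤ x ^ z := by
  rw [← neg_neg z, rpow_neg y, rpow_neg x]
  exact ENNReal.inv_le_inv.2 (rpow_le_rpow hxy (neg_nonneg.2 hz))

theorem rpow_le_add_mul_rpow {x A B X : ℝ≥0∞} (γ : ℝ) (hA : A * X ≤ x) (hB : x ≤ B * X)
    (hAt : A ≠ ⊤) (hBt : B ≠ ⊤) (hXt : X ≠ ⊤) : x ^ γ ≤ (A ^ γ + B ^ γ) * X ^ γ := by
  rw [add_mul, ← mul_rpow_of_ne_top hAt hXt, ← mul_rpow_of_ne_top hBt hXt]
  rcases le_total 0 γ with hγ | hγ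
  · exact le_add_left (rpow_le_rpow hB hγ)
  · exact le_add_right (rpow_le_rpow_of_nonpos hA hγ)

theorem min_mul_rpow_le_rpow {x A B X : ℝ≥0∞} (γ : ℝ) (hA : A * X ≤ x) (hB : x ≤ B * X)
    (hAt : A ≠ ⊤) (hBt : B ≠ ⊤) (hXt : X ≠ ⊤) : min (A ^ γ) (B ^ γ) * X ^ γ ≤ x ^ γ := by
  refine le_trans (le_min (mul_le_mul_left (min_le_left _ _) _)
    (mul_le_mul_left (min_le_right _ _) _)) ?_
  rw [← mul_rpow_of_ne_top hAt hXt, ← mul_rpow_of_ne_top hBt hXt]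
  rcases le_total 0 γ with hγ | hγ
  · exact (min_le_left _ _).trans (rpow_le_rpow hA hγ)
  · exact (min_le_right _ _).trans (rpow_le_rpow_of_nonpos hB hγ)

theorem exists_mul_two_rpow_neg_lt {c E : ℝ≥0∞} (hc : c ≠ ⊤) (hE : E ≠ 0) :
    ∃ m : ℕ, c * 2 ^ (-(m : ℝ)) < E := by
  obtain ⟨m, hm⟩ := exists_inv_two_pow_lt (ENNReal.div_pos hE hc).ne'
  refine ⟨m, ?_⟩
  rw [rpow_neg, rpow_natCast, ENNReal.inv_pow, mul_comm]
  exact mul_lt_of_lt_div hm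

theorem two_rpow_neg_add (u v : ℝ) : (2 : ℝ≥0∞) ^ (-(u + v)) = 2 ^ (-v) * 2 ^ (-u) := by
  rw [neg_add, rpow_add _ _ two_ne_zero ofNat_ne_top, mul_comm]

theorem two_rpow_neg_rpow_sub_one_mul (u α : ℝ) :
    ((2 : ℝ≥0∞) ^ (-u)) ^ (α - 1) * 2 ^ (-u) = 2 ^ (-(u * α)) := by
  rw [← rpow_mul, ← rpow_add _ _ two_ne_zero ofNat_ne_top]
  ring_nf

theorem two_rpow_neg_mul_eq (u α : ℝ) :
    (2 : ℝ≥0∞) ^ (-(u * α)) = 2 ^ α * 2 ^ (-((u + 1) * α)) := by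
  rw [← rpow_add _ _ two_ne_zero ofNat_ne_top]
  ring_nf

theorem tsum_sum_range_add_le (q : ℕ → ℝ≥0∞) (k m : ℕ) :
    ∑' j, ∑ r ∈ Finset.range m, q (j + k + r) ≤ m * ∑' j, q j := by
  rw [Summable.tsum_finsetSum fun _ _ => ENNReal.summable]
  calc ∑ r ∈ Finset.range m, ∑' j, q (j + k + r)
      ≤ ∑ r ∈ Finset.range m, ∑' j, q j := Finset.sum_le_sum fun r _ =>
        tsum_comp_le_tsum_of_injective (fun i j h => by simpa using h) q
    _ = m * ∑' j, q j := by simp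

end ENNReal

section Sandwich

variable {X : Type*} [MeasurableSpace X] {μ : Measure X} {S : Set X} {g w h : X → ℝ≥0∞}
  {C H : ℝ≥0∞}

theorem setLIntegral_mul_mul_le (hS : MeasurableSet S) (hw : Measurable w)
    (hg : ∀ s ∈ S, g s ≤ C) (hh : ∀ s ∈ S, h s ≤ H) :
    ∫⁻ s in S, g s * w s * h s ∂μ ≤ C * H * ∫⁻ s in S, w s ∂μ := by
  rw [← lintegral_const_mul _ hw]
  refine setLIntegral_mono' hS fun s hs => ?_
  rw [mul_right_comm C]
  exact mul_le_mul' (mul_le_mul_left (hg s hs) _) (hh s hs)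

theorem le_setLIntegral_mul_mul (hS : MeasurableSet S)
    (hg : ∀ s ∈ S, C ≤ g s) (hh : ∀ s ∈ S, H ≤ h s) :
    C * H * ∫⁻ s in S, w s ∂μ ≤ ∫⁻ s in S, g s * w s * h s ∂μ := by
  refine (lintegral_const_mul_le _ _).trans (setLIntegral_mono' hS fun s hs => ?_)
  rw [mul_right_comm C]
  exact mul_le_mul' (mul_le_mul_left (hg s hs) _) (hh s hs)

end Sandwich

def IocReal (u v : EReal) : Set ℝ := ((↑) : ℝ → EReal) ⁻¹' Ioc u v

theorem measurableSet_IocReal (u v : EReal) : MeasurableSet (IocReal u v) :=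
  measurable_coe_real_ereal measurableSet_Ioc

theorem Monotone.pairwise_disjoint_IocReal {y : ℕ → EReal} (hy : Monotone y) :
    Pairwise (Function.onFun Disjoint fun j => IocReal (y j) (y (j + 1))) := fun _ _ hij =>
  (hy.pairwise_disjoint_on_Ioc_succ hij).preimage _

theorem Monotone.IocReal_eq_biUnion {y : ℕ → EReal} (hy : Monotone y) (i l : ℕ) :
    IocReal (y i) (y l) = ⋃ j ∈ Finset.Ico i l, IocReal (y j) (y (j + 1)) := by
  have := hy.biUnion_Ico_Ioc_map_succ i l
  rw [← Finset.coe_Ico] at this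
  simp only [Finset.mem_coe, Order.succ_eq_add_one] at this
  simp only [IocReal, ← this, preimage_iUnion₂]

theorem Monotone.setLIntegral_IocReal_eq_sum {y : ℕ → EReal} (hy : Monotone y) (f : ℝ → ℝ≥0∞)
    (i l : ℕ) :
    ∫⁻ s in IocReal (y i) (y l), f s =
      ∑ j ∈ Finset.Ico i l, ∫⁻ s in IocReal (y j) (y (j + 1)), f s := by
  rw [hy.IocReal_eq_biUnion, lintegral_biUnion_finset
    (hy.pairwise_disjoint_IocReal.set_pairwise _) fun j _ => measurableSet_IocReal _ _]

theorem Monotone.Iab_eq_iUnion_IocReal {y : ℕ → EReal} (hy : Monotone y) {b : EReal}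
    (hyb : ∀ j, y j < b) (hcover : ∀ s ∈ Iab (y 0) b, ∃ l, (s : EReal) ≤ y l) :
    Iab (y 0) b = ⋃ j, IocReal (y j) (y (j + 1)) := by
  refine subset_antisymm (fun s hs => ?_) (iUnion_subset fun j s hs =>
    ⟨(hy (Nat.zero_le j)).trans_lt hs.1, hs.2.trans_lt (hyb _)⟩)
  obtain ⟨l, hl⟩ := hcover s hs
  have : s ∈ IocReal (y 0) (y l) := ⟨hs.1, hl⟩
  rw [hy.IocReal_eq_biUnion] at this
  exact iUnion₂_subset (fun j _ => subset_iUnion (fun j => IocReal (y j) (y (j + 1))) j) this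

theorem Monotone.setLIntegral_Iab_eq_tsum {y : ℕ → EReal} (hy : Monotone y) {b : EReal}
    (hyb : ∀ j, y j < b) (hcover : ∀ s ∈ Iab (y 0) b, ∃ l, (s : EReal) ≤ y l) (f : ℝ → ℝ≥0∞) :
    ∫⁻ s in Iab (y 0) b, f s = ∑' j, ∫⁻ s in IocReal (y j) (y (j + 1)), f s := by
  rw [hy.Iab_eq_iUnion_IocReal hyb hcover,
    lintegral_iUnion (fun j => measurableSet_IocReal _ _) hy.pairwise_disjoint_IocReal]

section Weight

variable {w : ℝ → ℝ≥0∞} {b : EReal}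

theorem Wf_antitone (w : ℝ → ℝ≥0∞) (b : EReal) : Antitone (Wf w b) := fun _ _ hst =>
  lintegral_mono_set fun _ hr => ⟨hst.trans_lt hr.1, hr.2⟩

theorem lt_of_Wf_pos {u : EReal} (hu : 0 < Wf w b u) : u < b := by
  by_contra! hbu
  have : Iab u b = ∅ := eq_empty_of_forall_notMem fun s hs => (hs.1.trans hs.2).not_ge hbu
  simp [Wf, this] at hu

theorem Wf_le_setLIntegral_IocReal_add (u v : EReal) :
    Wf w b u ≤ (∫⁻ s in IocReal u v, w s) + Wf w b v := by
  refine (lintegral_mono_set fun s hs => ?_).trans (lintegral_union_le _ _ _)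
  rcases le_or_gt (s : EReal) v with hsv | hvs
  · exact Or.inl ⟨hs.1, hsv⟩
  · exact Or.inr ⟨hvs, hs.2⟩

end Weight

-- The tail `y j = x (n + j)` of a discretizing sequence, with `t = n`.
structure IsDiscretizing (w : ℝ → ℝ≥0∞) (b : EReal) (d₁ d₂ : ℝ≥0∞) (t : ℝ) (y : ℕ → EReal) :
    Prop where
  strictMono : StrictMono y
  le_Wf : ∀ j : ℕ, d₁ * 2 ^ (-(t + j)) ≤ Wf w b (y j)
  Wf_le : ∀ j : ℕ, Wf w b (y j) ≤ d₂ * 2 ^ (-(t + j))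

def upperConst (α : ℝ) (d₁ d₂ : ℝ≥0∞) : ℝ≥0∞ :=
  ((d₁ * 2⁻¹) ^ (α - 1) + d₂ ^ (α - 1)) * d₂ * 2 ^ α

def lowerConst (α : ℝ) (d₁ d₂ : ℝ≥0∞) (m : ℕ) : ℝ≥0∞ :=
  min ((d₁ * 2 ^ (-(m : ℝ))) ^ (α - 1)) (d₂ ^ (α - 1)) * (d₁ - d₂ * 2 ^ (-(m : ℝ)))

theorem upperConst_lt_top {d₁ d₂ : ℝ≥0∞} (hd₁ : 0 < d₁) (hd : d₁ ≤ d₂) (hd₂ : d₂ < ⊤) (α : ℝ) :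
    upperConst α d₁ d₂ < ⊤ := by
  have h₁ : d₁ * 2⁻¹ ≠ ⊤ := mul_ne_top (hd.trans_lt hd₂).ne (by simp)
  have h₁' : d₁ * 2⁻¹ ≠ 0 := mul_ne_zero hd₁.ne' (by simp)
  unfold upperConst
  finiteness [rpow_ne_top_of_ne_zero h₁' h₁ (y := α - 1),
    rpow_ne_top_of_ne_zero (hd₁.trans_le hd).ne' hd₂.ne (y := α - 1)]

theorem lowerConst_div_pos {d₁ d₂ : ℝ≥0∞} (hd₁ : 0 < d₁) (hd : d₁ ≤ d₂) (hd₂ : d₂ < ⊤) (α : ℝ)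
    {m : ℕ} (hm : d₂ * 2 ^ (-(m : ℝ)) < d₁) : 0 < lowerConst α d₁ d₂ m / m := by
  refine ENNReal.div_pos (mul_ne_zero (lt_min ?_ ?_).ne' (tsub_pos_of_lt hm).ne') (natCast_ne_top m)
  · exact rpow_pos (by positivity) (mul_ne_top (hd.trans_lt hd₂).ne (by simp))
  · exact rpow_pos (hd₁.trans_le hd) hd₂.ne

namespace IsDiscretizing

variable {w : ℝ → ℝ≥0∞} {b : EReal} {d₁ d₂ : ℝ≥0∞} {t : ℝ} {y : ℕ → EReal}

theorem lt_right (hy : IsDiscretizing w b d₁ d₂ t y) (hd₁ : 0 < d₁) (j : ℕ) : y j < b :=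
  lt_of_Wf_pos ((by positivity : 0 < d₁ * 2 ^ (-(t + j))).trans_le (hy.le_Wf j))

theorem coe_toReal (hy : IsDiscretizing w b d₁ d₂ t y) (hd₁ : 0 < d₁) (j : ℕ) :
    ((y (j + 1)).toReal : EReal) = y (j + 1) :=
  EReal.coe_toReal (hy.lt_right hd₁ _).ne_top
    (bot_le.trans_lt (hy.strictMono j.succ_pos)).ne'

theorem toReal_mem_Iab (hy : IsDiscretizing w b d₁ d₂ t y) (hd₁ : 0 < d₁) (j : ℕ) :
    (y (j + 1)).toReal ∈ Iab (y 0) b := by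
  rw [Iab, mem_ofPred_eq, hy.coe_toReal hd₁]
  exact ⟨hy.strictMono j.succ_pos, hy.lt_right hd₁ _⟩

theorem exists_le (hy : IsDiscretizing w b d₁ d₂ t y) (hd₂ : d₂ ≠ ⊤) {s : EReal}
    (hs : 0 < Wf w b s) : ∃ l, s ≤ y l := by
  obtain ⟨l, hl⟩ := exists_mul_two_rpow_neg_lt (mul_ne_top hd₂ (by simp : (2 : ℝ≥0∞) ^ (-t) ≠ ⊤))
    hs.ne'
  refine ⟨l, le_of_not_gt fun hlt => ?_⟩
  have := (Wf_antitone w b hlt.le).trans (hy.Wf_le l)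
  rw [two_rpow_neg_add, ← mul_assoc, mul_right_comm] at this
  exact (this.trans_lt hl).false

theorem setLIntegral_Iab_eq_tsum (hy : IsDiscretizing w b d₁ d₂ t y) (hd₁ : 0 < d₁)
    (hd₂ : d₂ ≠ ⊤) (hW : ∀ s ∈ Iab (y 0) b, 0 < Wf w b s) (f : ℝ → ℝ≥0∞) :
    ∫⁻ s in Iab (y 0) b, f s = ∑' j, ∫⁻ s in IocReal (y j) (y (j + 1)), f s :=
  hy.strictMono.monotone.setLIntegral_Iab_eq_tsum (hy.lt_right hd₁)
    (fun s hs => hy.exists_le hd₂ (hW s hs)) f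

theorem IocReal_subset_Iab (hy : IsDiscretizing w b d₁ d₂ t y) (hd₁ : 0 < d₁) (i l : ℕ) :
    IocReal (y i) (y l) ⊆ Iab (y i) b := fun _ hs => ⟨hs.1, hs.2.trans_lt (hy.lt_right hd₁ l)⟩

theorem mem_Iab_of_mem_IocReal (hy : IsDiscretizing w b d₁ d₂ t y) (hd₁ : 0 < d₁) {i l : ℕ}
    {s : ℝ} (hs : s ∈ IocReal (y i) (y l)) : s ∈ Iab (y 0) b :=
  ⟨(hy.strictMono.monotone (Nat.zero_le i)).trans_lt hs.1, (hy.IocReal_subset_Iab hd₁ i l hs).2⟩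

theorem setLIntegral_IocReal_succ_le (hy : IsDiscretizing w b d₁ d₂ t y) (hw : Measurable w)
    (hd₁ : 0 < d₁) (hd : d₁ ≤ d₂) (hd₂ : d₂ < ⊤) {h : ℝ → ℝ≥0∞}
    (hh : MonotoneOn h (Iab (y 0) b)) (α : ℝ) (j : ℕ) :
    ∫⁻ s in IocReal (y j) (y (j + 1)), Wf w b s ^ (α - 1) * w s * h s ≤
      upperConst α d₁ d₂ * (2 ^ (-((t + (j + 1 : ℕ)) * α)) * h (y (j + 1)).toReal) := by
  set X : ℝ≥0∞ := 2 ^ (-(t + j))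
  have hX : (2 : ℝ≥0∞) ^ (-(t + (j + 1 : ℕ))) = 2⁻¹ * X := by
    rw [Nat.cast_succ, ← add_assoc, two_rpow_neg_add, rpow_neg_one]
  have hW : ∀ s ∈ IocReal (y j) (y (j + 1)),
      Wf w b s ^ (α - 1) ≤ ((d₁ * 2⁻¹) ^ (α - 1) + d₂ ^ (α - 1)) * X ^ (α - 1) := by
    intro s hs
    refine rpow_le_add_mul_rpow _ ?_ ?_ (mul_ne_top (hd.trans_lt hd₂).ne (by simp)) hd₂.ne
      (by simp [X])
    · calc d₁ * 2⁻¹ * X = d₁ * 2 ^ (-(t + (j + 1 : ℕ))) := by rw [hX, mul_assoc]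
        _ ≤ Wf w b s := (hy.le_Wf _).trans (Wf_antitone w b hs.2)
    · exact (Wf_antitone w b hs.1.le).trans (hy.Wf_le j)
  have hH : ∀ s ∈ IocReal (y j) (y (j + 1)), h s ≤ h (y (j + 1)).toReal := fun s hs =>
    hh (hy.mem_Iab_of_mem_IocReal hd₁ hs) (hy.toReal_mem_Iab hd₁ j)
      (by rw [← EReal.coe_le_coe_iff, hy.coe_toReal hd₁]; exact hs.2)
  have hmass : ∫⁻ s in IocReal (y j) (y (j + 1)), w s ≤ d₂ * X :=
    (lintegral_mono_set (hy.IocReal_subset_Iab hd₁ j (j + 1))).trans (hy.Wf_le j)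
  have hXX : X ^ (α - 1) * X = 2 ^ α * 2 ^ (-((t + (j + 1 : ℕ)) * α)) := by
    rw [two_rpow_neg_rpow_sub_one_mul, two_rpow_neg_mul_eq, Nat.cast_succ, add_assoc]
  calc _ ≤ _ := setLIntegral_mul_mul_le (measurableSet_IocReal _ _) hw hW hH
    _ ≤ ((d₁ * 2⁻¹) ^ (α - 1) + d₂ ^ (α - 1)) * X ^ (α - 1) * h (y (j + 1)).toReal *
        (d₂ * X) := by gcongr
    _ = ((d₁ * 2⁻¹) ^ (α - 1) + d₂ ^ (α - 1)) * d₂ * (X ^ (α - 1) * X) *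
        h (y (j + 1)).toReal := by ring
    _ = _ := by rw [hXX, upperConst]; ring

theorem le_setLIntegral_IocReal (hy : IsDiscretizing w b d₁ d₂ t y) (hd₁ : 0 < d₁)
    (hd : d₁ ≤ d₂) (hd₂ : d₂ < ⊤) {h : ℝ → ℝ≥0∞} (hh : MonotoneOn h (Iab (y 0) b)) (α : ℝ)
    (m j : ℕ) :
    lowerConst α d₁ d₂ m * (2 ^ (-((t + (j + 1 : ℕ)) * α)) * h (y (j + 1)).toReal) ≤
      ∫⁻ s in IocReal (y (j + 1)) (y (j + 1 + m)), Wf w b s ^ (α - 1) * w s * h s := by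
  set X : ℝ≥0∞ := 2 ^ (-(t + (j + 1 : ℕ)))
  have hX : (2 : ℝ≥0∞) ^ (-(t + (j + 1 + m : ℕ))) = 2 ^ (-(m : ℝ)) * X := by
    rw [Nat.cast_add _ m, ← add_assoc, two_rpow_neg_add]
  have hW : ∀ s ∈ IocReal (y (j + 1)) (y (j + 1 + m)),
      min ((d₁ * 2 ^ (-(m : ℝ))) ^ (α - 1)) (d₂ ^ (α - 1)) * X ^ (α - 1) ≤
        Wf w b s ^ (α - 1) := by
    intro s hs
    refine min_mul_rpow_le_rpow _ ?_ ?_ (mul_ne_top (hd.trans_lt hd₂).ne (by simp)) hd₂.ne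
      (by simp [X])
    · calc d₁ * 2 ^ (-(m : ℝ)) * X = d₁ * 2 ^ (-(t + (j + 1 + m : ℕ))) := by rw [hX, mul_assoc]
        _ ≤ Wf w b s := (hy.le_Wf _).trans (Wf_antitone w b hs.2)
    · exact (Wf_antitone w b hs.1.le).trans (hy.Wf_le _)
  have hH : ∀ s ∈ IocReal (y (j + 1)) (y (j + 1 + m)), h (y (j + 1)).toReal ≤ h s := fun s hs =>
    hh (hy.toReal_mem_Iab hd₁ j) (hy.mem_Iab_of_mem_IocReal hd₁ hs)
      (by rw [← EReal.coe_le_coe_iff, hy.coe_toReal hd₁]; exact hs.1.le)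
  have hmass : (d₁ - d₂ * 2 ^ (-(m : ℝ))) * X ≤ ∫⁻ s in IocReal (y (j + 1)) (y (j + 1 + m)), w s :=
    calc (d₁ - d₂ * 2 ^ (-(m : ℝ))) * X = d₁ * X - d₂ * 2 ^ (-(m : ℝ)) * X :=
          ENNReal.sub_mul fun _ _ => by simp [X]
      _ ≤ Wf w b (y (j + 1)) - Wf w b (y (j + 1 + m)) :=
          tsub_le_tsub (hy.le_Wf _) (by rw [mul_assoc, ← hX]; exact hy.Wf_le _)
      _ ≤ _ := tsub_le_iff_right.2 (Wf_le_setLIntegral_IocReal_add _ _)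
  calc _ = lowerConst α d₁ d₂ m * (X ^ (α - 1) * X) * h (y (j + 1)).toReal := by
        rw [two_rpow_neg_rpow_sub_one_mul, mul_assoc]
    _ = min ((d₁ * 2 ^ (-(m : ℝ))) ^ (α - 1)) (d₂ ^ (α - 1)) * X ^ (α - 1) *
        h (y (j + 1)).toReal * ((d₁ - d₂ * 2 ^ (-(m : ℝ))) * X) := by rw [lowerConst]; ring
    _ ≤ _ := by gcongr
    _ ≤ _ := le_setLIntegral_mul_mul (measurableSet_IocReal _ _) hW hH

theorem setLIntegral_le_upperConst_mul_tsum (hy : IsDiscretizing w b d₁ d₂ t y)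
    (hw : Measurable w) (hd₁ : 0 < d₁) (hd : d₁ ≤ d₂) (hd₂ : d₂ < ⊤)
    (hW : ∀ s ∈ Iab (y 0) b, 0 < Wf w b s) {h : ℝ → ℝ≥0∞} (hh : MonotoneOn h (Iab (y 0) b))
    (α : ℝ) :
    ∫⁻ s in Iab (y 0) b, Wf w b s ^ (α - 1) * w s * h s ≤
      upperConst α d₁ d₂ * ∑' j : ℕ, 2 ^ (-((t + (j + 1 : ℕ)) * α)) * h (y (j + 1)).toReal := by
  rw [hy.setLIntegral_Iab_eq_tsum hd₁ hd₂.ne hW, ← ENNReal.tsum_mul_left]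
  exact ENNReal.tsum_le_tsum fun j => hy.setLIntegral_IocReal_succ_le hw hd₁ hd hd₂ hh α j

theorem lowerConst_div_mul_tsum_le (hy : IsDiscretizing w b d₁ d₂ t y) (hd₁ : 0 < d₁)
    (hd : d₁ ≤ d₂) (hd₂ : d₂ < ⊤) (hW : ∀ s ∈ Iab (y 0) b, 0 < Wf w b s) {h : ℝ → ℝ≥0∞}
    (hh : MonotoneOn h (Iab (y 0) b)) (α : ℝ) (m : ℕ) :
    lowerConst α d₁ d₂ m / m *
        ∑' j : ℕ, 2 ^ (-((t + (j + 1 : ℕ)) * α)) * h (y (j + 1)).toReal ≤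
      ∫⁻ s in Iab (y 0) b, Wf w b s ^ (α - 1) * w s * h s := by
  set q : ℕ → ℝ≥0∞ := fun j =>
    ∫⁻ s in IocReal (y j) (y (j + 1)), Wf w b s ^ (α - 1) * w s * h s
  have hpiece (j : ℕ) :
      lowerConst α d₁ d₂ m * (2 ^ (-((t + (j + 1 : ℕ)) * α)) * h (y (j + 1)).toReal) ≤
        ∑ r ∈ Finset.range m, q (j + 1 + r) := by
    calc _ ≤ _ := hy.le_setLIntegral_IocReal hd₁ hd hd₂ hh α m j
      _ = ∑ i ∈ Finset.Ico (j + 1) (j + 1 + m), q i :=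
        hy.strictMono.monotone.setLIntegral_IocReal_eq_sum _ _ _
      _ = _ := by rw [Finset.sum_Ico_eq_sum_range, Nat.add_sub_cancel_left]
  rw [div_eq_mul_inv, mul_right_comm, ← div_eq_mul_inv]
  refine div_le_of_le_mul ?_
  calc _ = ∑' j : ℕ, lowerConst α d₁ d₂ m *
        (2 ^ (-((t + (j + 1 : ℕ)) * α)) * h (y (j + 1)).toReal) := ENNReal.tsum_mul_left.symm
    _ ≤ ∑' j, ∑ r ∈ Finset.range m, q (j + 1 + r) := ENNReal.tsum_le_tsum hpiece
    _ ≤ m * ∑' j, q j := tsum_sum_range_add_le q 1 m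
    _ = _ := by rw [hy.setLIntegral_Iab_eq_tsum hd₁ hd₂.ne hW, mul_comm]

end IsDiscretizing

def natEquivIntGT (n : ℤ) : ℕ ≃ {k : ℤ // n < k} where
  toFun j := ⟨n + (j + 1 : ℕ), by omega⟩
  invFun k := (k.1 - n - 1).toNat
  left_inv j := by simp
  right_inv k := Subtype.ext (by have := k.2; simp; omega)

theorem statement13 (α : ℝ) (d₁ d₂ : ℝ≥0∞) (hd₁ : 0 < d₁) (hd₂ : d₂ < ∞)
    (hd : d₁ ≤ d₂) :
    ∃ c₁ c₂ : ℝ≥0∞, 0 < c₁ ∧ c₂ < ∞ ∧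
      ∀ (a b : EReal), a < b →
      ∀ w : ℝ → ℝ≥0∞, Measurable w →
        (∀ x ∈ Iab a b, 0 < w x ∧ w x < ∞) →
        (∀ t ∈ Iab a b, 0 < Wf w b (t : EReal) ∧ Wf w b (t : EReal) < ∞) →
      ∀ (N : ℤ) (x : ℤ → EReal),
        x N = a →
        (∀ k, N ≤ k → x k < x (k + 1)) →
        (∀ k, N ≤ k → a ≤ x k ∧ x k ≤ b) →
        (∀ k, N < k → x k ≠ ⊥ ∧ x k ≠ ⊤) →
        (∀ k, N ≤ k → d₁ * (2 : ℝ≥0∞) ^ (-(k : ℝ)) ≤ Wf w b (x k) ∧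
          Wf w b (x k) ≤ d₂ * (2 : ℝ≥0∞) ^ (-(k : ℝ))) →
        ∀ n : ℤ, N ≤ n →
        ∀ h : ℝ → ℝ≥0∞, MonotoneOn h (Iab a b) →
          c₁ * (∑' k : {k : ℤ // n < k},
                (2 : ℝ≥0∞) ^ (-((k.1 : ℝ) * α)) * h (x k.1).toReal) ≤
              (∫⁻ s in Iab (x n) b, Wf w b (s : EReal) ^ (α - 1) * w s * h s) ∧
            (∫⁻ s in Iab (x n) b, Wf w b (s : EReal) ^ (α - 1) * w s * h s) ≤
              c₂ * ∑' k : {k : ℤ // n < k},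
                (2 : ℝ≥0∞) ^ (-((k.1 : ℝ) * α)) * h (x k.1).toReal := by
  obtain ⟨m, hm⟩ := exists_mul_two_rpow_neg_lt hd₂.ne hd₁.ne'
  refine ⟨lowerConst α d₁ d₂ m / m, upperConst α d₁ d₂, lowerConst_div_pos hd₁ hd hd₂ α hm,
    upperConst_lt_top hd₁ hd hd₂ α, ?_⟩
  intro a b _ w hw _ hWpos N x _ hxsucc hxab _ hWbd n hn h hmono
  set y : ℕ → EReal := fun j => x (n + j)
  have hy : IsDiscretizing w b d₁ d₂ n y := by
    refine ⟨strictMono_nat_of_lt_succ fun j => ?_, fun j => ?_, fun j => ?_⟩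
    · simpa [y, add_assoc] using hxsucc (n + j) (by omega)
    · simpa using (hWbd (n + j) (by omega)).1
    · simpa using (hWbd (n + j) (by omega)).2
  have hy0 : y 0 = x n := by simp [y]
  have hsub : Iab (y 0) b ⊆ Iab a b := fun s hs => ⟨(hxab n hn).1.trans_lt (hy0 ▸ hs.1), hs.2⟩
  have hW : ∀ s ∈ Iab (y 0) b, 0 < Wf w b s := fun s hs => (hWpos s (hsub hs)).1
  have hsum : ∑' k : {k : ℤ // n < k}, (2 : ℝ≥0∞) ^ (-((k.1 : ℝ) * α)) * h (x k.1).toReal =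
      ∑' j : ℕ, 2 ^ (-(((n : ℝ) + (j + 1 : ℕ)) * α)) * h (y (j + 1)).toReal := by
    rw [← (natEquivIntGT n).tsum_eq]
    simp [natEquivIntGT, y]
  rw [hsum, ← hy0]
  exact ⟨hy.lowerConst_div_mul_tsum_le hd₁ hd hd₂ hW (hmono.mono hsub) α m,
    hy.setLIntegral_le_upperConst_mul_tsum hw hd₁ hd hd₂ hW (hmono.mono hsub) α⟩
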